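/- Let σ be a finite positive Borel measure on (0, 1/2] and let f(x) = ∫ sin(απ) x^{-α} dσ(α), g(x) = (x^{1/2} + ∫ cos(απ) x^{1/2-α} dσ(α))² + (∫ sin(απ) x^{1/2-α} dσ(α))² for x > 0. Then f/(π g) is a completely monotone function on (0,∞). -/

import Mathlib

/-!
The numerator `f` is a mixture `∫ c(α) x^{e(α)} dσ(α)` with `c ≥ 0` and `e ≤ 0`; differentiating
under the integral sign, its `n`-th derivative has weight `c(α) e(α) (e(α) - 1) ⋯ (e(α) - n + 1)`,
of sign `(-1)^n`, so `f` is completely monotone. Expanding the squares (the products of two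
integrals become integrals over `σ ⊗ σ`), the denominator is
`g(x) = x + 2 ∫ cos(απ) x^{1-α} + ∬ (cos(απ) cos(βπ) + sin(απ) sin(βπ)) x^{1-α-β}`,
a sum of powers `x^β` with `β ∈ [0, 1]` and nonnegative weights, so `g'` is completely monotone.
For positive `g` with completely monotone `g'`, the reciprocal `1/g` is completely monotone:
`(1/g)' = -g' · (1/g)²`, and Leibniz's rule propagates the signs by strong induction on the order.
Products of completely monotone functions are completely monotone, again by Leibniz's rule.
-/

open Real Set MeasureTheory

/-- A function is completely monotone on `(0, ∞)` if it is infinitely differentiable there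
and `(-1)^n f^(n)(x) ≥ 0` for all `n ≥ 0` and `x > 0`. -/
def CompletelyMonotoneOn (f : ℝ → ℝ) : Prop :=
  (∀ x : ℝ, 0 < x → ContDiffAt ℝ ((⊤ : ℕ∞) : WithTop ℕ∞) f x) ∧
    ∀ (n : ℕ) (x : ℝ), 0 < x → 0 ≤ (-1 : ℝ) ^ n * iteratedDeriv n f x

open Filter Topology Finset
open scoped ContDiff

section ChainOfDerivatives

variable {𝕜 F : Type*} [NontriviallyNormedField 𝕜] [NormedAddCommGroup F] [NormedSpace 𝕜 F]
  {D : ℕ → 𝕜 → F} {s : Set 𝕜}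

theorem contDiffOn_of_hasDerivAt_succ (hs : IsOpen s)
    (hD : ∀ n, ∀ x ∈ s, HasDerivAt (D n) (D (n + 1) x) x) (n : ℕ) :
    ContDiffOn 𝕜 ∞ (D n) s := by
  suffices ∀ m : ℕ, ∀ k, ContDiffOn 𝕜 m (D k) s from contDiffOn_infty.2 fun m => this m n
  intro m
  induction m with
  | zero => exact fun k => contDiffOn_zero.2 fun x hx => (hD k x hx).continuousAt.continuousWithinAt
  | succ m ih =>
    intro k
    refine (contDiffOn_succ_iff_deriv_of_isOpen hs).2
      ⟨fun x hx => (hD k x hx).differentiableAt.differentiableWithinAt, by simp,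
        (ih (k + 1)).congr fun x hx => (hD k x hx).deriv⟩

theorem iteratedDeriv_eq_of_hasDerivAt_succ (hs : IsOpen s)
    (hD : ∀ n, ∀ x ∈ s, HasDerivAt (D n) (D (n + 1) x) x) (n : ℕ) {x : 𝕜}
    (hx : x ∈ s) :
    iteratedDeriv n (D 0) x = D n x := by
  induction n generalizing x with
  | zero => simp
  | succ n ih =>
    rw [iteratedDeriv_succ, (eventuallyEq_of_mem (hs.mem_nhds hx) fun y hy => ih hy).deriv_eq]
    exact (hD n x hx).deriv

end ChainOfDerivatives

theorem neg_one_pow_mul_iteratedDeriv_mul_nonneg {f g : ℝ → ℝ} {x : ℝ} {n : ℕ}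
    (hf : ContDiffAt ℝ n f x) (hg : ContDiffAt ℝ n g x)
    (hf' : ∀ k ≤ n, 0 ≤ (-1 : ℝ) ^ k * iteratedDeriv k f x)
    (hg' : ∀ k ≤ n, 0 ≤ (-1 : ℝ) ^ k * iteratedDeriv k g x) :
    0 ≤ (-1 : ℝ) ^ n * iteratedDeriv n (fun y => f y * g y) x := by
  rw [iteratedDeriv_fun_mul hf hg, mul_sum]
  refine sum_nonneg fun k hk => ?_
  have hkn : k ≤ n := Nat.lt_succ_iff.1 (mem_range.1 hk)
  have hsplit : (-1 : ℝ) ^ n = (-1) ^ k * (-1) ^ (n - k) := by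
    rw [← pow_add, Nat.add_sub_cancel' hkn]
  calc (0 : ℝ) ≤ n.choose k * (((-1) ^ k * iteratedDeriv k f x) *
        ((-1) ^ (n - k) * iteratedDeriv (n - k) g x)) :=
        mul_nonneg (Nat.cast_nonneg _) (mul_nonneg (hf' k hkn) (hg' _ (Nat.sub_le n k)))
    _ = _ := by rw [hsplit]; ring

theorem completelyMonotoneOn_const {c : ℝ} (hc : 0 ≤ c) : CompletelyMonotoneOn fun _ => c :=
  ⟨fun _ _ => contDiffAt_const, fun n _ _ => by
    rw [iteratedDeriv_const]; split_ifs <;> simp [*]⟩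

namespace CompletelyMonotoneOn

variable {f g : ℝ → ℝ}

theorem contDiffAt (hf : CompletelyMonotoneOn f) {x : ℝ} (hx : 0 < x) (n : ℕ) :
    ContDiffAt ℝ n f x :=
  (hf.1 x hx).of_le (mod_cast le_top)

theorem congr (hf : CompletelyMonotoneOn f) (hfg : EqOn f g (Ioi 0)) :
    CompletelyMonotoneOn g := by
  have hev : ∀ x, 0 < x → f =ᶠ[𝓝 x] g := fun x hx =>
    eventuallyEq_of_mem (Ioi_mem_nhds hx) hfg
  exact ⟨fun x hx => (hf.1 x hx).congr_of_eventuallyEq (hev x hx).symm,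
    fun n x hx => (hev x hx).iteratedDeriv_eq n ▸ hf.2 n x hx⟩

theorem add (hf : CompletelyMonotoneOn f) (hg : CompletelyMonotoneOn g) :
    CompletelyMonotoneOn fun x => f x + g x :=
  ⟨fun x hx => (hf.1 x hx).add (hg.1 x hx), fun n x hx => by
    rw [iteratedDeriv_fun_add (hf.contDiffAt hx n) (hg.contDiffAt hx n), mul_add]
    exact add_nonneg (hf.2 n x hx) (hg.2 n x hx)⟩

theorem const_mul (hf : CompletelyMonotoneOn f) {c : ℝ} (hc : 0 ≤ c) :
    CompletelyMonotoneOn fun x => c * f x :=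
  ⟨fun x hx => contDiffAt_const.mul (hf.1 x hx), fun n x hx => by
    rw [iteratedDeriv_const_mul c (hf.contDiffAt hx n), mul_left_comm]
    exact mul_nonneg hc (hf.2 n x hx)⟩

theorem mul (hf : CompletelyMonotoneOn f) (hg : CompletelyMonotoneOn g) :
    CompletelyMonotoneOn fun x => f x * g x :=
  ⟨fun x hx => (hf.1 x hx).mul (hg.1 x hx), fun n x hx =>
    neg_one_pow_mul_iteratedDeriv_mul_nonneg (hf.contDiffAt hx n) (hg.contDiffAt hx n)
      (fun k _ => hf.2 k x hx) (fun k _ => hg.2 k x hx)⟩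

end CompletelyMonotoneOn

def HasCompletelyMonotoneDeriv (g : ℝ → ℝ) : Prop :=
  (∀ x : ℝ, 0 < x → ContDiffAt ℝ ∞ g x) ∧ CompletelyMonotoneOn (deriv g)

theorem hasCompletelyMonotoneDeriv_id : HasCompletelyMonotoneDeriv fun x => x :=
  ⟨fun _ _ => contDiffAt_id, by
    simpa only [deriv_id''] using completelyMonotoneOn_const zero_le_one⟩

namespace HasCompletelyMonotoneDeriv

variable {f g : ℝ → ℝ}

theorem differentiableAt (hg : HasCompletelyMonotoneDeriv g) {x : ℝ} (hx : 0 < x) :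
    DifferentiableAt ℝ g x :=
  (hg.1 x hx).differentiableAt (by simp)

theorem congr (hf : HasCompletelyMonotoneDeriv f) (hfg : EqOn f g (Ioi 0)) :
    HasCompletelyMonotoneDeriv g := by
  have hev : ∀ x, 0 < x → f =ᶠ[𝓝 x] g := fun x hx =>
    eventuallyEq_of_mem (Ioi_mem_nhds hx) hfg
  exact ⟨fun x hx => (hf.1 x hx).congr_of_eventuallyEq (hev x hx).symm,
    hf.2.congr fun x hx => (hev x hx).deriv_eq⟩

theorem add (hf : HasCompletelyMonotoneDeriv f) (hg : HasCompletelyMonotoneDeriv g) :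
    HasCompletelyMonotoneDeriv fun x => f x + g x :=
  ⟨fun x hx => (hf.1 x hx).add (hg.1 x hx), (hf.2.add hg.2).congr fun _ hx =>
    (deriv_fun_add (hf.differentiableAt hx) (hg.differentiableAt hx)).symm⟩

theorem const_mul (hf : HasCompletelyMonotoneDeriv f) {c : ℝ} (hc : 0 ≤ c) :
    HasCompletelyMonotoneDeriv fun x => c * f x :=
  ⟨fun x hx => contDiffAt_const.mul (hf.1 x hx), (hf.2.const_mul hc).congr fun _ _ =>
    (deriv_const_mul_field c).symm⟩

theorem completelyMonotoneOn_inv (hg : HasCompletelyMonotoneDeriv g)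
    (hpos : ∀ x, 0 < x → 0 < g x) : CompletelyMonotoneOn fun x => (g x)⁻¹ := by
  set u := fun x => (g x)⁻¹
  have hu : ∀ x, 0 < x → ContDiffAt ℝ ∞ u x := fun x hx => (hg.1 x hx).inv (hpos x hx).ne'
  have hderiv : EqOn (deriv u) (fun y => -(deriv g y * (u y * u y))) (Ioi 0) := fun y hy => by
    rw [deriv_fun_inv'' (hg.differentiableAt hy) (hpos y hy).ne']
    simp only [u]; ring
  refine ⟨hu, fun n => ?_⟩
  induction n using Nat.strong_induction_on with
  | _ n ih =>
    intro x hx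
    cases n with
    | zero => simpa [u] using (hpos x hx).le
    | succ m =>
      have huu : ∀ k ≤ m, 0 ≤ (-1 : ℝ) ^ k * iteratedDeriv k (fun y => u y * u y) x :=
        fun k hk => neg_one_pow_mul_iteratedDeriv_mul_nonneg
          ((hu x hx).of_le (mod_cast le_top)) ((hu x hx).of_le (mod_cast le_top))
          (fun j hj => ih j (by omega) x hx) (fun j hj => ih j (by omega) x hx)
      have key := neg_one_pow_mul_iteratedDeriv_mul_nonneg (hg.2.contDiffAt hx m)
        (((hu x hx).mul (hu x hx)).of_le (mod_cast le_top)) (fun k _ => hg.2.2 k x hx) huu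
      rw [iteratedDeriv_succ', (eventuallyEq_of_mem (Ioi_mem_nhds hx) hderiv).iteratedDeriv_eq,
        iteratedDeriv_fun_neg, pow_succ]
      linarith

end HasCompletelyMonotoneDeriv

theorem rpow_le_rpow_neg_add_rpow {a b t u M : ℝ} (ha : 0 < a) (hat : a ≤ t) (htb : t ≤ b)
    (hu : |u| ≤ M) : t ^ u ≤ a ^ (-M) + b ^ M := by
  have ht : 0 < t := ha.trans_le hat
  have hM : 0 ≤ M := (abs_nonneg u).trans hu
  rcases le_total t 1 with h1 | h1
  · calc t ^ u ≤ t ^ (-M) := rpow_le_rpow_of_exponent_ge ht h1 (abs_le.1 hu).1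
      _ ≤ a ^ (-M) := rpow_le_rpow_of_nonpos ha hat (by linarith)
      _ ≤ a ^ (-M) + b ^ M := le_add_of_nonneg_right (rpow_nonneg (ht.le.trans htb) M)
  · calc t ^ u ≤ t ^ M := rpow_le_rpow_of_exponent_le h1 (abs_le.1 hu).2
      _ ≤ b ^ M := rpow_le_rpow ht.le htb hM
      _ ≤ a ^ (-M) + b ^ M := le_add_of_nonneg_left (rpow_nonneg ha.le _)

section PowerMixture

variable {Ω Ω' : Type*} [MeasurableSpace Ω] [MeasurableSpace Ω'] {μ : Measure Ω}
  {c e : Ω → ℝ} {K M x : ℝ}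

noncomputable def powerMixture (μ : Measure Ω) (c e : Ω → ℝ) (x : ℝ) : ℝ :=
  ∫ a, c a * x ^ e a ∂μ

theorem rpow_mul_powerMixture (hx : 0 < x) (p : ℝ) :
    x ^ p * powerMixture μ c e x = powerMixture μ c (fun a => p + e a) x := by
  rw [powerMixture, powerMixture, ← integral_const_mul]
  congr 1 with a
  rw [rpow_add hx]; ring

theorem powerMixture_mul_powerMixture [SFinite μ] {ν : Measure Ω'} [SFinite ν]
    {c' e' : Ω' → ℝ} (hx : 0 < x) :
    powerMixture μ c e x * powerMixture ν c' e' x =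
      powerMixture (μ.prod ν) (fun p => c p.1 * c' p.2) (fun p => e p.1 + e' p.2) x := by
  rw [powerMixture, powerMixture, powerMixture, ← integral_prod_mul]
  congr 1 with p
  rw [rpow_add hx]; ring

theorem rpow_half_add_powerMixture_sq_add_powerMixture_sq [SFinite μ] {s : Ω → ℝ}
    (hx : 0 < x) :
    (x ^ (1 / 2 : ℝ) + powerMixture μ c e x) ^ 2 + powerMixture μ s e x ^ 2 =
      x + 2 * powerMixture μ c (fun a => 1 / 2 + e a) x
        + powerMixture (μ.prod μ) (fun p => c p.1 * c p.2) (fun p => e p.1 + e p.2) x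
        + powerMixture (μ.prod μ) (fun p => s p.1 * s p.2) (fun p => e p.1 + e p.2) x := by
  have hsq : x ^ (1 / 2 : ℝ) * x ^ (1 / 2 : ℝ) = x := by
    rw [← rpow_add hx]; norm_num
  rw [← rpow_mul_powerMixture hx, ← powerMixture_mul_powerMixture hx,
    ← powerMixture_mul_powerMixture hx]
  linear_combination hsq

noncomputable def powerMixtureDeriv (μ : Measure Ω) (c e : Ω → ℝ) (n : ℕ) : ℝ → ℝ :=
  powerMixture μ (fun a => c a * ∏ i ∈ range n, (e a - i)) (fun a => e a - n)

theorem powerMixtureDeriv_zero : powerMixtureDeriv μ c e 0 = powerMixture μ c e := by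
  simp [powerMixtureDeriv]

variable [IsFiniteMeasure μ]

theorem hasDerivAt_powerMixture (hc : Measurable c) (he : Measurable e)
    (hcK : ∀ᵐ a ∂μ, |c a| ≤ K) (heM : ∀ᵐ a ∂μ, |e a| ≤ M) (hx : 0 < x) :
    HasDerivAt (powerMixture μ c e)
      (powerMixture μ (fun a => c a * e a) (fun a => e a - 1) x) x := by
  have hx2 : 0 < x / 2 := by linarith
  have hball : ∀ t ∈ Metric.ball x (x / 2), x / 2 ≤ t ∧ t ≤ x + x / 2 := fun t ht => by
    rw [Real.ball_eq_Ioo] at ht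
    exact ⟨by linarith [ht.1], by linarith [ht.2]⟩
  have hmeas : ∀ (c e : Ω → ℝ), Measurable c → Measurable e → ∀ t,
      AEStronglyMeasurable (fun a => c a * t ^ e a) μ := fun c e hc he t =>
    (hc.mul (measurable_const.pow he)).aestronglyMeasurable
  refine (hasDerivAt_integral_of_dominated_loc_of_deriv_le (μ := μ)
    (F' := fun t a => c a * e a * t ^ (e a - 1))
    (bound := fun _ => K * (M + 1) * ((x / 2) ^ (-(M + 1)) + (x + x / 2) ^ (M + 1)))
    (Metric.ball_mem_nhds x hx2) (Eventually.of_forall (hmeas c e hc he)) ?_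
    (hmeas _ _ (hc.mul he) (he.sub measurable_const) x) ?_ (integrable_const _) ?_).2
  · refine (integrable_const (K * ((x / 2) ^ (-M) + (x + x / 2) ^ M))).mono'
      (hmeas c e hc he x) ?_
    filter_upwards [hcK, heM] with a hca hea
    rw [norm_mul, norm_of_nonneg (rpow_pos_of_pos hx _).le]
    exact mul_le_mul hca (rpow_le_rpow_neg_add_rpow hx2 (by linarith) (by linarith) hea)
      (rpow_nonneg hx.le _) ((abs_nonneg _).trans hca)
  · filter_upwards [hcK, heM] with a hca hea t ht
    obtain ⟨ht1, ht2⟩ := hball t ht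
    have he1 : |e a - 1| ≤ M + 1 := (abs_sub _ _).trans (by rw [abs_one]; linarith)
    rw [norm_mul, norm_mul, norm_of_nonneg (rpow_pos_of_pos (hx2.trans_le ht1) _).le]
    exact mul_le_mul (mul_le_mul hca (hea.trans (by linarith)) (abs_nonneg _)
      ((abs_nonneg _).trans hca)) (rpow_le_rpow_neg_add_rpow hx2 ht1 ht2 he1)
      (rpow_nonneg (hx2.trans_le ht1).le _)
      (mul_nonneg ((abs_nonneg _).trans hca) (by linarith [(abs_nonneg (e a)).trans hea]))
  · refine Eventually.of_forall fun a t ht => ?_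
    have ht0 : 0 < t := hx2.trans_le (hball t ht).1
    exact ((hasDerivAt_rpow_const (Or.inl ht0.ne')).const_mul (c a)).congr_deriv (by ring)

theorem hasDerivAt_powerMixtureDeriv (hc : Measurable c) (he : Measurable e)
    (hcK : ∀ᵐ a ∂μ, |c a| ≤ K) (heM : ∀ᵐ a ∂μ, |e a| ≤ M) (n : ℕ) (hx : 0 < x) :
    HasDerivAt (powerMixtureDeriv μ c e n) (powerMixtureDeriv μ c e (n + 1) x) x := by
  have habs : ∀ a, |e a| ≤ M → ∀ i : ℕ, |e a - i| ≤ M + i := fun a ha i =>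
    (abs_sub _ _).trans (by rw [Nat.abs_cast]; linarith)
  have h := hasDerivAt_powerMixture (μ := μ) (c := fun a => c a * ∏ i ∈ range n, (e a - i))
    (e := fun a => e a - n) (K := K * ∏ i ∈ range n, (M + i)) (M := M + n)
    (hc.mul (measurable_prod _ fun i _ => he.sub measurable_const))
    (he.sub measurable_const) ?_ ?_ hx
  · have hc' : (fun a => c a * ∏ i ∈ range (n + 1), (e a - i)) =
        fun a => c a * (∏ i ∈ range n, (e a - i)) * (e a - n) :=
      funext fun a => by rw [prod_range_succ]; ring
    have he' : (fun a => e a - (n + 1 : ℕ)) = fun a => e a - n - 1 :=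
      funext fun a => by push_cast; ring
    rwa [powerMixtureDeriv, powerMixtureDeriv, hc', he']
  · filter_upwards [hcK, heM] with a hca hea
    rw [abs_mul, abs_prod]
    exact mul_le_mul hca (prod_le_prod (fun i _ => abs_nonneg _) fun i _ => habs a hea i)
      (prod_nonneg fun i _ => abs_nonneg _) ((abs_nonneg _).trans hca)
  · filter_upwards [heM] with a hea using habs a hea n

theorem contDiffAt_powerMixture (hc : Measurable c) (he : Measurable e)
    (hcK : ∀ᵐ a ∂μ, |c a| ≤ K) (heM : ∀ᵐ a ∂μ, |e a| ≤ M) (hx : 0 < x) :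
    ContDiffAt ℝ ∞ (powerMixture μ c e) x := by
  rw [← powerMixtureDeriv_zero]
  exact (contDiffOn_of_hasDerivAt_succ isOpen_Ioi
    (fun n _ hy => hasDerivAt_powerMixtureDeriv hc he hcK heM n hy) 0).contDiffAt
    (Ioi_mem_nhds hx)

theorem iteratedDeriv_powerMixture (hc : Measurable c) (he : Measurable e)
    (hcK : ∀ᵐ a ∂μ, |c a| ≤ K) (heM : ∀ᵐ a ∂μ, |e a| ≤ M) (n : ℕ) (hx : 0 < x) :
    iteratedDeriv n (powerMixture μ c e) x = powerMixtureDeriv μ c e n x := by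
  rw [← powerMixtureDeriv_zero]
  exact iteratedDeriv_eq_of_hasDerivAt_succ isOpen_Ioi
    (fun n _ hy => hasDerivAt_powerMixtureDeriv hc he hcK heM n hy) n hx

theorem completelyMonotoneOn_powerMixture (hc : Measurable c) (he : Measurable e)
    (hcK : ∀ᵐ a ∂μ, c a ∈ Set.Icc 0 K) (heM : ∀ᵐ a ∂μ, e a ∈ Set.Icc (-M) 0) :
    CompletelyMonotoneOn (powerMixture μ c e) := by
  have hcK' : ∀ᵐ a ∂μ, |c a| ≤ K := by
    filter_upwards [hcK] with a h using abs_le.2 ⟨by linarith [h.1, h.2], h.2⟩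
  have heM' : ∀ᵐ a ∂μ, |e a| ≤ M := by
    filter_upwards [heM] with a h using abs_le.2 ⟨h.1, by linarith [h.1, h.2]⟩
  refine ⟨fun x hx => contDiffAt_powerMixture hc he hcK' heM' hx, fun n x hx => ?_⟩
  rw [iteratedDeriv_powerMixture hc he hcK' heM' n hx, powerMixtureDeriv, powerMixture,
    ← integral_const_mul]
  refine integral_nonneg_of_ae ?_
  filter_upwards [hcK, heM] with a hca hea
  have hsign :
      (-1 : ℝ) ^ n * ∏ i ∈ range n, (e a - i) = ∏ i ∈ range n, ((i : ℝ) - e a) :=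
    calc (-1 : ℝ) ^ n * ∏ i ∈ range n, (e a - i) = ∏ i ∈ range n, (-1 * (e a - i)) := by
          rw [prod_mul_distrib, prod_const, card_range]
      _ = _ := prod_congr rfl fun i _ => by ring
  calc (0 : ℝ) ≤ c a * (∏ i ∈ range n, ((i : ℝ) - e a)) * x ^ (e a - n) :=
        mul_nonneg (mul_nonneg hca.1 (prod_nonneg fun i _ => by linarith [hea.2,
          (Nat.cast_nonneg i : (0 : ℝ) ≤ i)])) (rpow_nonneg hx.le _)
    _ = _ := by rw [← hsign]; ring

theorem hasCompletelyMonotoneDeriv_powerMixture (hc : Measurable c) (he : Measurable e)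
    (hcK : ∀ᵐ a ∂μ, c a ∈ Set.Icc 0 K) (he01 : ∀ᵐ a ∂μ, e a ∈ Set.Icc 0 1) :
    HasCompletelyMonotoneDeriv (powerMixture μ c e) := by
  have hcK' : ∀ᵐ a ∂μ, |c a| ≤ K := by
    filter_upwards [hcK] with a h using abs_le.2 ⟨by linarith [h.1, h.2], h.2⟩
  have he1 : ∀ᵐ a ∂μ, |e a| ≤ 1 := by
    filter_upwards [he01] with a h using abs_le.2 ⟨by linarith [h.1], h.2⟩
  refine ⟨fun x hx => contDiffAt_powerMixture hc he hcK' he1 hx, ?_⟩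
  refine (completelyMonotoneOn_powerMixture (c := fun a => c a * e a) (e := fun a => e a - 1)
    (K := K) (M := 1) (hc.mul he)
    (he.sub measurable_const) ?_ ?_).congr fun x hx =>
      (hasDerivAt_powerMixture hc he hcK' he1 hx).deriv.symm
  · filter_upwards [hcK, he01] with a hca hea
    exact ⟨mul_nonneg hca.1 hea.1, by nlinarith [hca.1, hca.2, hea.1, hea.2]⟩
  · filter_upwards [he01] with a hea
    exact ⟨by linarith [hea.1], by linarith [hea.2]⟩

end PowerMixture

theorem sin_mul_pi_mem_Icc {α : ℝ} (h : α ∈ Set.Icc 0 1) : sin (α * π) ∈ Set.Icc 0 1 :=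
  ⟨sin_nonneg_of_nonneg_of_le_pi (by nlinarith [pi_pos, h.1]) (by nlinarith [pi_pos, h.2]),
    sin_le_one _⟩

theorem cos_mul_pi_mem_Icc {α : ℝ} (h : α ∈ Set.Icc 0 (1 / 2)) :
    cos (α * π) ∈ Set.Icc 0 1 :=
  ⟨cos_nonneg_of_mem_Icc ⟨by nlinarith [pi_pos, h.1], by nlinarith [pi_pos, h.2]⟩,
    cos_le_one _⟩

theorem hasCompletelyMonotoneDeriv_boolean_density_denominator {σ : Measure ℝ} [IsFiniteMeasure σ]
    (hσ : ∀ᵐ α ∂σ, α ∈ Set.Ioc (0 : ℝ) (1 / 2)) :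
    HasCompletelyMonotoneDeriv fun x =>
      (x ^ (1 / 2 : ℝ) + ∫ α, cos (α * π) * x ^ (1 / 2 - α) ∂σ) ^ 2 +
        (∫ α, sin (α * π) * x ^ (1 / 2 - α) ∂σ) ^ 2 := by
  have hσ₂ : ∀ᵐ p ∂σ.prod σ,
      p.1 ∈ Set.Ioc (0 : ℝ) (1 / 2) ∧ p.2 ∈ Set.Ioc (0 : ℝ) (1 / 2) :=
    (Measure.quasiMeasurePreserving_fst.ae hσ).and (Measure.quasiMeasurePreserving_snd.ae hσ)
  have hcos : ∀ α ∈ Set.Ioc (0 : ℝ) (1 / 2), cos (α * π) ∈ Set.Icc 0 1 := fun α h =>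
    cos_mul_pi_mem_Icc (Ioc_subset_Icc_self h)
  have hsin : ∀ α ∈ Set.Ioc (0 : ℝ) (1 / 2), sin (α * π) ∈ Set.Icc 0 1 := fun α h =>
    sin_mul_pi_mem_Icc ⟨h.1.le, h.2.trans (by norm_num)⟩
  have hexp : ∀ α ∈ Set.Ioc (0 : ℝ) (1 / 2), 1 / 2 - α ∈ Set.Icc 0 (1 / 2) := fun α h =>
    ⟨by linarith [h.2], by linarith [h.1]⟩
  have hC := hasCompletelyMonotoneDeriv_powerMixture (μ := σ) (c := fun α => cos (α * π))
    (e := fun α => 1 / 2 + (1 / 2 - α)) (K := 1) (by fun_prop) (by fun_prop)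
    (hσ.mono hcos)
    (hσ.mono fun α h => ⟨by linarith [(hexp α h).1], by linarith [(hexp α h).2]⟩)
  have hexp₂ : ∀ᵐ p ∂σ.prod σ, (1 / 2 - p.1) + (1 / 2 - p.2) ∈ Set.Icc (0 : ℝ) 1 :=
    hσ₂.mono fun p h => ⟨by linarith [(hexp _ h.1).1, (hexp _ h.2).1],
      by linarith [(hexp _ h.1).2, (hexp _ h.2).2]⟩
  have hCC := hasCompletelyMonotoneDeriv_powerMixture (μ := σ.prod σ)
    (c := fun p => cos (p.1 * π) * cos (p.2 * π)) (e := fun p => (1 / 2 - p.1) + (1 / 2 - p.2))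
    (K := 1) (by fun_prop) (by fun_prop) (hσ₂.mono fun p h => ⟨mul_nonneg (hcos _ h.1).1
      (hcos _ h.2).1, mul_le_one₀ (hcos _ h.1).2 (hcos _ h.2).1 (hcos _ h.2).2⟩) hexp₂
  have hSS := hasCompletelyMonotoneDeriv_powerMixture (μ := σ.prod σ)
    (c := fun p => sin (p.1 * π) * sin (p.2 * π)) (e := fun p => (1 / 2 - p.1) + (1 / 2 - p.2))
    (K := 1) (by fun_prop) (by fun_prop) (hσ₂.mono fun p h => ⟨mul_nonneg (hsin _ h.1).1
      (hsin _ h.2).1, mul_le_one₀ (hsin _ h.1).2 (hsin _ h.2).1 (hsin _ h.2).2⟩) hexp₂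
  exact (((hasCompletelyMonotoneDeriv_id.add (hC.const_mul zero_le_two)).add hCC).add hSS).congr
    fun x hx => (rpow_half_add_powerMixture_sq_add_powerMixture_sq (μ := σ)
      (c := fun α => cos (α * π)) (s := fun α => sin (α * π)) (e := fun α => 1 / 2 - α)
      hx).symm

theorem continuous_boolean_convolution_density_completely_monotone
    (σ : Measure ℝ) [IsFiniteMeasure σ]
    (hsupp : σ (Set.Ioc (0 : ℝ) (1 / 2))ᶜ = 0) :
    CompletelyMonotoneOn
      (fun x : ℝ =>
        (∫ α, Real.sin (α * π) * x ^ (-α) ∂σ) /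
          (π * ((x ^ (1 / 2 : ℝ) + ∫ α, Real.cos (α * π) * x ^ (1 / 2 - α) ∂σ) ^ 2 +
            (∫ α, Real.sin (α * π) * x ^ (1 / 2 - α) ∂σ) ^ 2))) := by
  have hσ : ∀ᵐ α ∂σ, α ∈ Set.Ioc (0 : ℝ) (1 / 2) := mem_ae_iff.2 hsupp
  have hnum : CompletelyMonotoneOn (powerMixture σ (fun α => sin (α * π)) (fun α => -α)) :=
    completelyMonotoneOn_powerMixture (K := 1) (M := 1 / 2) (by fun_prop) (by fun_prop)
      (hσ.mono fun α h => sin_mul_pi_mem_Icc ⟨h.1.le, h.2.trans (by norm_num)⟩)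
      (hσ.mono fun α h => ⟨by linarith [h.2], by linarith [h.1]⟩)
  have hpos : ∀ x : ℝ, 0 < x →
      0 < (x ^ (1 / 2 : ℝ) + ∫ α, cos (α * π) * x ^ (1 / 2 - α) ∂σ) ^ 2
        + (∫ α, sin (α * π) * x ^ (1 / 2 - α) ∂σ) ^ 2 := fun x hx => by
    have hC : 0 ≤ ∫ α, cos (α * π) * x ^ (1 / 2 - α) ∂σ := integral_nonneg_of_ae <|
      hσ.mono fun α h => mul_nonneg (cos_mul_pi_mem_Icc (Ioc_subset_Icc_self h)).1
        (rpow_nonneg hx.le _)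
    positivity
  have hinv :=
    (hasCompletelyMonotoneDeriv_boolean_density_denominator hσ).completelyMonotoneOn_inv hpos
  refine ((hnum.const_mul (inv_nonneg.2 pi_pos.le)).mul hinv).congr fun x _ => ?_
  simp only [powerMixture, div_eq_mul_inv, mul_inv]
  ring
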